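/- There exists a smooth map φ : S^{n-1} × S¹ → Sⁿ of degree 1 such that φ* g_{Sⁿ} ≤ g_{S^{n-1}} + 4 g_{S¹}, and for each t ∈ S¹ the map φ(·,t) : S^{n-1} → Sⁿ is either Lipschitz with Lipschitz constant strictly less than 1, or is the standard equatorial inclusion x ↦ (x,0). -/

import Mathlib

/-!
STATEMENT 4: There is a smooth degree-one map φ : S^{n-1} × S¹ → Sⁿ with
φ* g_{Sⁿ} ≤ g_{S^{n-1}} + 4 g_{S¹}, such that each φ(·,t) is either Lipschitz with
constant < 1 or the standard equatorial inclusion.  Here n = m + 2 ≥ 2.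

Encodings: spheres are unit spheres in Euclidean spaces with their standard smooth
structure; S¹ is `Circle`.  "Degree 1" is encoded, via Hopf's classification of maps into
the sphere by their degree, as: φ is homotopic (within the sphere) to the explicit
degree-one model map `degOneModel`.  The Riemannian pullback inequality is expressed on
derivatives of curves, and "Lipschitz with constant < 1" is with respect to the geodesic
(great-circle) distances arccos⟨·,·⟩.
-/

open scoped InnerProductSpace Manifold

noncomputable instance factFinrankEuclidean (k : ℕ) :
    Fact (Module.finrank ℝ (EuclideanSpace ℝ (Fin (k + 1))) = k + 1) :=
  ⟨finrank_euclideanSpace_fin⟩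

/-- An explicit degree-one map S^{m+1} × S¹ → S^{m+2} (valued in the ambient ℝ^{m+3}):
for arguments of nonnegative angle θ it is the suspension sweep (sin θ · x, cos θ); for
negative θ it runs back along the meridian through the fixed point `a`. -/
noncomputable def degOneModel (m : ℕ)
    (a : Metric.sphere (0 : EuclideanSpace ℝ (Fin (m + 2))) 1)
    (p : Metric.sphere (0 : EuclideanSpace ℝ (Fin (m + 2))) 1 × Circle) :
    EuclideanSpace ℝ (Fin (m + 3)) :=
  let θ := Complex.arg (p.2 : ℂ)
  if 0 ≤ θ then
    (WithLp.toLp 2 (Fin.snoc (WithLp.ofLp (Real.sin θ • ((p.1 : EuclideanSpace ℝ (Fin (m + 2))))) : Fin (m + 2) → ℝ)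
      (Real.cos θ)) : EuclideanSpace ℝ (Fin (m + 3)))
  else
    (WithLp.toLp 2 (Fin.snoc (WithLp.ofLp (Real.sin θ • ((a : EuclideanSpace ℝ (Fin (m + 2))))) : Fin (m + 2) → ℝ)
      (Real.cos θ)) : EuclideanSpace ℝ (Fin (m + 3)))


open Real intervalIntegral Topology Filter

noncomputable def bfun (s : ℝ) : ℝ :=
  2 * Real.smoothTransition ((s ^ 2 - (1/2) ^ 2) / (1/2) ^ 2) *
    Real.smoothTransition (((π - 1/2) ^ 2 - s ^ 2) / (1/2) ^ 2)

lemma bfun_nonneg (s : ℝ) : 0 ≤ bfun s := by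
  unfold bfun
  have := Real.smoothTransition.nonneg ((s ^ 2 - (1/2) ^ 2) / (1/2) ^ 2)
  have := Real.smoothTransition.nonneg (((π - 1/2) ^ 2 - s ^ 2) / (1/2) ^ 2)
  positivity

lemma bfun_le_two (s : ℝ) : bfun s ≤ 2 := by
  unfold bfun
  have h1 := Real.smoothTransition.le_one ((s ^ 2 - (1/2) ^ 2) / (1/2) ^ 2)
  have h2 := Real.smoothTransition.le_one (((π - 1/2) ^ 2 - s ^ 2) / (1/2) ^ 2)
  have h3 := Real.smoothTransition.nonneg ((s ^ 2 - (1/2) ^ 2) / (1/2) ^ 2)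
  have h4 := Real.smoothTransition.nonneg (((π - 1/2) ^ 2 - s ^ 2) / (1/2) ^ 2)
  nlinarith

lemma bfun_even (s : ℝ) : bfun (-s) = bfun s := by simp [bfun]

lemma bfun_contDiff : ContDiff ℝ (⊤ : ℕ∞) bfun := by
  have h1 : ContDiff ℝ (⊤ : ℕ∞) fun s : ℝ => (s ^ 2 - (1/2) ^ 2) / (1/2) ^ 2 :=
    (((contDiff_id.pow 2).sub contDiff_const).div_const _)
  have h2 : ContDiff ℝ (⊤ : ℕ∞) fun s : ℝ => ((π - 1/2) ^ 2 - s ^ 2) / (1/2) ^ 2 :=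
    ((contDiff_const.sub (contDiff_id.pow 2)).div_const _)
  exact ((contDiff_const.mul (Real.smoothTransition.contDiff.comp h1)).mul
    (Real.smoothTransition.contDiff.comp h2))

lemma bfun_continuous : Continuous bfun := bfun_contDiff.continuous

lemma bfun_zero_small {s : ℝ} (h : |s| ≤ 1/2) : bfun s = 0 := by
  have : s ^ 2 ≤ (1/2) ^ 2 := by
    have := abs_nonneg s
    calc s ^ 2 = |s| ^ 2 := (sq_abs s).symm
    _ ≤ (1/2) ^ 2 := by nlinarith
  have : Real.smoothTransition ((s ^ 2 - (1/2) ^ 2) / (1/2) ^ 2) = 0 := by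
    apply Real.smoothTransition.zero_of_nonpos
    apply div_nonpos_of_nonpos_of_nonneg <;> nlinarith
  unfold bfun; rw [this]; ring

lemma bfun_zero_big {s : ℝ} (h : π - 1/2 ≤ |s|) : bfun s = 0 := by
  have hpi : (0:ℝ) < π - 1/2 := by nlinarith [Real.pi_gt_three]
  have : (π - 1/2) ^ 2 ≤ s ^ 2 := by
    rw [← sq_abs s]; nlinarith [abs_nonneg s]
  have : Real.smoothTransition (((π - 1/2) ^ 2 - s ^ 2) / (1/2) ^ 2) = 0 := by
    apply Real.smoothTransition.zero_of_nonpos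
    apply div_nonpos_of_nonpos_of_nonneg <;> nlinarith
  unfold bfun; rw [this]; ring

lemma bfun_eq_two {s : ℝ} (h1 : 3/4 ≤ s) (h2 : s ≤ 5/2) : bfun s = 2 := by
  have e1 : Real.smoothTransition ((s ^ 2 - (1/2) ^ 2) / (1/2) ^ 2) = 1 := by
    apply Real.smoothTransition.one_of_one_le
    rw [le_div_iff₀ (by norm_num)]; nlinarith
  have e2 : Real.smoothTransition (((π - 1/2) ^ 2 - s ^ 2) / (1/2) ^ 2) = 1 := by
    apply Real.smoothTransition.one_of_one_le
    rw [le_div_iff₀ (by norm_num)]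
    nlinarith [Real.pi_gt_d6]
  unfold bfun; rw [e1, e2]; ring

lemma bfun_intInt (a b : ℝ) : IntervalIntegrable bfun MeasureTheory.volume a b :=
  bfun_continuous.intervalIntegrable a b

noncomputable def Inorm : ℝ := ∫ s in (0:ℝ)..π, bfun s

lemma Inorm_ge : π ≤ Inorm := by
  have h52 : (5/2 : ℝ) ≤ π := by nlinarith [Real.pi_gt_three]
  have key : (∫ s in (0:ℝ)..(3/4), bfun s) + (∫ s in (3/4:ℝ)..(5/2), bfun s)
      + (∫ s in (5/2:ℝ)..π, bfun s) = Inorm := by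
    rw [integral_add_adjacent_intervals (bfun_intInt _ _) (bfun_intInt _ _),
      integral_add_adjacent_intervals (bfun_intInt _ _) (bfun_intInt _ _)]
    rfl
  have h1 : 0 ≤ ∫ s in (0:ℝ)..(3/4), bfun s :=
    integral_nonneg (by norm_num) (fun u _ => bfun_nonneg u)
  have h3 : 0 ≤ ∫ s in (5/2:ℝ)..π, bfun s :=
    integral_nonneg h52 (fun u _ => bfun_nonneg u)
  have h2 : (∫ s in (3/4:ℝ)..(5/2), bfun s) = 2 * (5/2 - 3/4) := by
    rw [integral_congr (g := fun _ => (2:ℝ))]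
    · simp; ring
    · intro u hu
      rw [Set.uIcc_of_le (by norm_num)] at hu
      exact bfun_eq_two hu.1 hu.2
  rw [← key, h2]
  nlinarith [Real.pi_lt_d2]

lemma Inorm_pos : 0 < Inorm := lt_of_lt_of_le Real.pi_pos Inorm_ge

noncomputable def psi (θ : ℝ) : ℝ := (π / Inorm) * ∫ s in (0:ℝ)..θ, bfun s

lemma hasDerivAt_psi (θ : ℝ) : HasDerivAt psi ((π / Inorm) * bfun θ) θ := by
  have h : HasDerivAt (fun t => ∫ s in (0:ℝ)..t, bfun s) (bfun θ) θ :=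
    (bfun_continuous.integral_hasStrictDerivAt 0 θ).hasDerivAt
  exact h.const_mul (π / Inorm)

lemma psi_contDiff : ContDiff ℝ (⊤ : ℕ∞) psi := by
  have hd : deriv psi = fun θ => (π / Inorm) * bfun θ :=
    funext fun θ => (hasDerivAt_psi θ).deriv
  exact contDiff_infty_iff_deriv.mpr ⟨fun θ => (hasDerivAt_psi θ).differentiableAt, by
    rw [hd]; exact contDiff_const.mul bfun_contDiff⟩

lemma psi_deriv_nonneg (θ : ℝ) : 0 ≤ (π / Inorm) * bfun θ :=
  mul_nonneg (div_nonneg Real.pi_pos.le Inorm_pos.le) (bfun_nonneg θ)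

lemma psi_deriv_le_two (θ : ℝ) : (π / Inorm) * bfun θ ≤ 2 := by
  have h1 : π / Inorm ≤ 1 := (div_le_one Inorm_pos).mpr Inorm_ge
  have h2 := bfun_le_two θ
  have h0 : 0 ≤ π / Inorm := div_nonneg Real.pi_pos.le Inorm_pos.le
  nlinarith [bfun_nonneg θ]

lemma psi_odd (θ : ℝ) : psi (-θ) = -psi θ := by
  unfold psi
  have : (∫ s in (0:ℝ)..(-θ), bfun s) = -∫ s in (0:ℝ)..θ, bfun s := by
    have := integral_comp_neg (a := (0:ℝ)) (b := θ) (f := bfun)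
    simp only [bfun_even, neg_zero] at this
    rw [this, integral_symm]
  rw [this]; ring

lemma psi_mono {θ₁ θ₂ : ℝ} (h : θ₁ ≤ θ₂) : psi θ₁ ≤ psi θ₂ := by
  unfold psi
  have key : (∫ s in (0:ℝ)..θ₂, bfun s) - (∫ s in (0:ℝ)..θ₁, bfun s)
      = ∫ s in θ₁..θ₂, bfun s := by
    rw [← integral_add_adjacent_intervals (bfun_intInt 0 θ₁) (bfun_intInt θ₁ θ₂)]
    ring
  have h2 : 0 ≤ ∫ s in θ₁..θ₂, bfun s := integral_nonneg h (fun u _ => bfun_nonneg u)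
  have h0 : 0 ≤ π / Inorm := div_nonneg Real.pi_pos.le Inorm_pos.le
  nlinarith

lemma psi_zero : psi 0 = 0 := by simp [psi]

lemma psi_pi : psi π = π := by
  unfold psi
  rw [show (∫ s in (0:ℝ)..π, bfun s) = Inorm from rfl]
  field_simp [Inorm_pos.ne']

lemma psi_flat_zero {θ : ℝ} (h : |θ| ≤ 1/2) : psi θ = 0 := by
  unfold psi
  have : (∫ s in (0:ℝ)..θ, bfun s) = ∫ s in (0:ℝ)..θ, (0:ℝ) := by
    apply integral_congr
    intro u hu
    apply bfun_zero_small
    rcases abs_le.mp h with ⟨h1, h2⟩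
    rw [Set.uIcc_comm] at hu
    rcases Set.mem_uIcc.mp hu with ⟨hu1, hu2⟩ | ⟨hu1, hu2⟩ <;> rw [abs_le] <;>
      constructor <;> linarith
  rw [this]; simp

lemma psi_flat_pi {θ : ℝ} (h : π - 1/2 ≤ θ) : psi θ = π := by
  have key : (∫ s in (0:ℝ)..θ, bfun s) = Inorm + ∫ s in π..θ, bfun s := by
    rw [← integral_add_adjacent_intervals (bfun_intInt 0 π) (bfun_intInt π θ)]; rfl
  have hz : (∫ s in π..θ, bfun s) = 0 := by
    rw [integral_congr (g := fun _ => (0:ℝ))]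
    · simp
    · intro u hu
      apply bfun_zero_big
      rcases Set.mem_uIcc.mp hu with ⟨hu1, hu2⟩ | ⟨hu1, hu2⟩
      · rw [abs_of_nonneg (by linarith [Real.pi_pos])]; linarith [Real.pi_pos]
      · rw [abs_of_nonneg (by nlinarith [Real.pi_gt_three])]; linarith [Real.pi_gt_three]
  unfold psi
  rw [key, hz, add_zero]
  field_simp [Inorm_pos.ne']

lemma psi_nonneg {θ : ℝ} (h : 0 ≤ θ) : 0 ≤ psi θ := psi_zero ▸ psi_mono h

lemma psi_le_pi {θ : ℝ} (h : θ ≤ π) : psi θ ≤ π := psi_pi ▸ psi_mono h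

open scoped InnerProductSpace

noncomputable def snocE {n : ℕ} (v : EuclideanSpace ℝ (Fin n)) (r : ℝ) :
    EuclideanSpace ℝ (Fin (n + 1)) :=
  (WithLp.toLp 2 (Fin.snoc (WithLp.ofLp v : Fin n → ℝ) r) : EuclideanSpace ℝ (Fin (n + 1)))

noncomputable def snocCLM (n : ℕ) :
    (EuclideanSpace ℝ (Fin n) × ℝ) →L[ℝ] EuclideanSpace ℝ (Fin (n + 1)) :=
  LinearMap.toContinuousLinearMap
    { toFun := fun p => snocE p.1 p.2
      map_add' := by
        intro p q
        ext i
        induction i using Fin.lastCases with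
        | last => simp [snocE, Fin.snoc_last]
        | cast i => simp [snocE, Fin.snoc_castSucc]
      map_smul' := by
        intro c p
        ext i
        induction i using Fin.lastCases with
        | last => simp [snocE, Fin.snoc_last]
        | cast i => simp [snocE, Fin.snoc_castSucc] }

lemma snocCLM_apply {n : ℕ} (v : EuclideanSpace ℝ (Fin n)) (r : ℝ) :
    snocCLM n (v, r) = snocE v r := rfl

lemma inner_snoc {n : ℕ} (v w : EuclideanSpace ℝ (Fin n)) (r t : ℝ) :
    ⟪snocE v r, snocE w t⟫_ℝ = ⟪v, w⟫_ℝ + r * t := by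
  simp only [snocE, PiLp.inner_apply, RCLike.inner_apply, starRingEnd_apply, star_trivial]
  rw [Fin.sum_univ_castSucc]
  simp [Fin.snoc_castSucc, Fin.snoc_last, mul_comm]

lemma norm_snoc_sq {n : ℕ} (v : EuclideanSpace ℝ (Fin n)) (r : ℝ) :
    ‖snocE v r‖ ^ 2 = ‖v‖ ^ 2 + r ^ 2 := by
  have h := inner_snoc v v r r
  rw [real_inner_self_eq_norm_sq, real_inner_self_eq_norm_sq] at h
  rw [h]
  ring

lemma norm_snoc_one {n : ℕ} (v : EuclideanSpace ℝ (Fin n)) (r : ℝ) (h : ‖v‖ ^ 2 + r ^ 2 = 1) :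
    ‖snocE v r‖ = 1 := by
  have h2 := norm_snoc_sq v r
  rw [h] at h2
  have := norm_nonneg (snocE v r)
  nlinarith

/-! ### The map Φ -/

open scoped InnerProductSpace Manifold

theorem finrank_cplx_fact' : Fact (Module.finrank ℝ ℂ = 1 + 1) :=
  Complex.finrank_real_complex_fact

attribute [local instance] finrank_cplx_fact'

noncomputable def PhiAmb (m : ℕ) (a : Metric.sphere (0 : EuclideanSpace ℝ (Fin (m + 2))) 1)
    (p : Metric.sphere (0 : EuclideanSpace ℝ (Fin (m + 2))) 1 × Circle) :
    EuclideanSpace ℝ (Fin (m + 3)) :=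
  let θ := Complex.arg (p.2 : ℂ)
  if 0 ≤ θ then
    snocE (Real.sin (psi θ) • (p.1 : EuclideanSpace ℝ (Fin (m + 2)))) (Real.cos (psi θ))
  else
    snocE (Real.sin (psi θ) • (a : EuclideanSpace ℝ (Fin (m + 2)))) (Real.cos (psi θ))

lemma norm_sphere_coe {k : ℕ} (x : Metric.sphere (0 : EuclideanSpace ℝ (Fin k)) 1) :
    ‖(x : EuclideanSpace ℝ (Fin k))‖ = 1 :=
  mem_sphere_zero_iff_norm.1 x.2

lemma PhiAmb_norm (m : ℕ) (a : Metric.sphere (0 : EuclideanSpace ℝ (Fin (m + 2))) 1)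
    (p : Metric.sphere (0 : EuclideanSpace ℝ (Fin (m + 2))) 1 × Circle) :
    ‖PhiAmb m a p‖ = 1 := by
  unfold PhiAmb
  dsimp only
  split_ifs <;>
  · apply norm_snoc_one
    rw [norm_smul, norm_sphere_coe, mul_one, Real.norm_eq_abs, sq_abs, Real.sin_sq_add_cos_sq]

lemma PhiAmb_mem (m : ℕ) (a : Metric.sphere (0 : EuclideanSpace ℝ (Fin (m + 2))) 1)
    (p : Metric.sphere (0 : EuclideanSpace ℝ (Fin (m + 2))) 1 × Circle) :
    PhiAmb m a p ∈ Metric.sphere (0 : EuclideanSpace ℝ (Fin (m + 3))) 1 :=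
  mem_sphere_zero_iff_norm.2 (PhiAmb_norm m a p)

/-! ### Flat-zone lemmas -/

lemma abs_arg_le_half {z : ℂ} (hz : ‖z‖ = 1) (h : Real.cos (1/2) < z.re) :
    |Complex.arg z| ≤ 1/2 := by
  have hz0 : z ≠ 0 := by intro h0; rw [h0] at hz; simp at hz
  have hcos : Real.cos (Complex.arg z) = z.re := by
    rw [Complex.cos_arg hz0, hz, div_one]
  by_contra hcon
  push_neg at hcon
  have := Real.cos_lt_cos_of_nonneg_of_le_pi (by norm_num) (Complex.abs_arg_le_pi z) hcon
  rw [Real.cos_abs, hcos] at this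
  linarith

lemma psi_arg_eq_zero {z : ℂ} (hz : ‖z‖ = 1) (h : Real.cos (1/2) < z.re) :
    psi (Complex.arg z) = 0 :=
  psi_flat_zero (abs_arg_le_half hz h)

lemma abs_arg_ge {z : ℂ} (hz : ‖z‖ = 1) (h : z.re < -Real.cos (1/2)) :
    π - 1/2 ≤ |Complex.arg z| := by
  have hz0 : z ≠ 0 := by intro h0; rw [h0] at hz; simp at hz
  have hcos : Real.cos (Complex.arg z) = z.re := by
    rw [Complex.cos_arg hz0, hz, div_one]
  by_contra hcon
  push_neg at hcon
  have hpi : π - 1/2 ≤ π := by norm_num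
  have := Real.cos_lt_cos_of_nonneg_of_le_pi (abs_nonneg _) hpi hcon
  rw [Real.cos_abs, hcos, Real.cos_pi_sub] at this
  linarith

lemma psi_arg_south {z : ℂ} (hz : ‖z‖ = 1) (h : z.re < -Real.cos (1/2)) :
    Real.sin (psi (Complex.arg z)) = 0 ∧ Real.cos (psi (Complex.arg z)) = -1 := by
  have habs := abs_arg_ge hz h
  rcases le_or_gt 0 (Complex.arg z) with hpos | hneg
  · rw [abs_of_nonneg hpos] at habs
    rw [psi_flat_pi habs]
    simp
  · rw [abs_of_neg hneg] at habs
    have : psi (Complex.arg z) = -π := by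
      have := psi_flat_pi (θ := -Complex.arg z) habs
      have ho := psi_odd (-Complex.arg z)
      rw [neg_neg] at ho
      rw [ho, this]
    rw [this]
    simp

lemma PhiAmb_NP (m : ℕ) (a : Metric.sphere (0 : EuclideanSpace ℝ (Fin (m + 2))) 1)
    (p : Metric.sphere (0 : EuclideanSpace ℝ (Fin (m + 2))) 1 × Circle)
    (h : Real.cos (1/2) < ((p.2 : ℂ)).re) :
    PhiAmb m a p = snocE (0 : EuclideanSpace ℝ (Fin (m + 2))) 1 := by
  have h0 := psi_arg_eq_zero (Circle.norm_coe p.2) h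
  unfold PhiAmb
  dsimp only
  split_ifs <;> rw [h0] <;> simp

lemma PhiAmb_SP (m : ℕ) (a : Metric.sphere (0 : EuclideanSpace ℝ (Fin (m + 2))) 1)
    (p : Metric.sphere (0 : EuclideanSpace ℝ (Fin (m + 2))) 1 × Circle)
    (h : ((p.2 : ℂ)).re < -Real.cos (1/2)) :
    PhiAmb m a p = snocE (0 : EuclideanSpace ℝ (Fin (m + 2))) (-1) := by
  obtain ⟨hs, hc⟩ := psi_arg_south (Circle.norm_coe p.2) h
  unfold PhiAmb
  dsimp only
  split_ifs <;> rw [hs, hc] <;> simp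

/-! ### Smoothness -/

lemma cos_half_lt_one : Real.cos (1/2) < 1 := by
  have h := Real.cos_lt_cos_of_nonneg_of_le_pi le_rfl
    (by linarith [Real.pi_gt_three] : (1:ℝ)/2 ≤ π) (by norm_num : (0:ℝ) < 1/2)
  rwa [Real.cos_zero] at h

lemma contDiffAt_arg' {z : ℂ} (hz : z ∈ Complex.slitPlane) :
    ContDiffAt ℝ (⊤ : ℕ∞) Complex.arg z := by
  have h : ContDiffAt ℝ (⊤ : ℕ∞) (fun w => (Complex.log w).im) z :=
    Complex.imCLM.contDiff.contDiffAt.comp z ((Complex.contDiffAt_log hz).restrict_scalars ℝ)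
  have he : Complex.arg = fun w => (Complex.log w).im := by
    funext w; rw [Complex.log_im]
  rw [he]; exact h

lemma snocE_decomp (n : ℕ) (v : EuclideanSpace ℝ (Fin n)) (r : ℝ) :
    snocE v r = snocCLM n (v, 0) + snocCLM n (0, r) := by
  rw [← map_add]
  norm_num
  rfl

section SmoothPhi

variable (m : ℕ) (a : Metric.sphere (0 : EuclideanSpace ℝ (Fin (m + 2))) 1)

lemma PhiAmb_contMDiff :
    ContMDiff ((𝓡 (m + 1)).prod (𝓡 1)) 𝓘(ℝ, EuclideanSpace ℝ (Fin (m + 3))) (⊤ : ℕ∞) (PhiAmb m a) := by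
  intro p
  have hcS : ContMDiffAt ((𝓡 (m + 1)).prod (𝓡 1)) 𝓘(ℝ, EuclideanSpace ℝ (Fin (m + 2))) (⊤ : ℕ∞)
      (fun q : Metric.sphere (0 : EuclideanSpace ℝ (Fin (m + 2))) 1 × Circle =>
        (q.1 : EuclideanSpace ℝ (Fin (m + 2)))) p :=
    (contMDiff_coe_sphere.comp contMDiff_fst).contMDiffAt
  have hcC : ContMDiffAt ((𝓡 (m + 1)).prod (𝓡 1)) 𝓘(ℝ, ℂ) (⊤ : ℕ∞)
      (fun q : Metric.sphere (0 : EuclideanSpace ℝ (Fin (m + 2))) 1 × Circle =>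
        (q.2 : ℂ)) p :=
    (contMDiff_coe_sphere.comp contMDiff_snd).contMDiffAt
  have hreC : ContinuousAt (fun q : Metric.sphere (0 : EuclideanSpace ℝ (Fin (m + 2))) 1 × Circle
      => ((q.2 : ℂ)).re) p := Complex.continuous_re.continuousAt.comp hcC.continuousAt
  have himC : ContinuousAt (fun q : Metric.sphere (0 : EuclideanSpace ℝ (Fin (m + 2))) 1 × Circle
      => ((q.2 : ℂ)).im) p := Complex.continuous_im.continuousAt.comp hcC.continuousAt
  -- smooth model on a branch, given a smooth "meridian base point" map
  have key : ∀ (w : Metric.sphere (0 : EuclideanSpace ℝ (Fin (m + 2))) 1 × Circle →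
        EuclideanSpace ℝ (Fin (m + 2))),
      ContMDiffAt ((𝓡 (m + 1)).prod (𝓡 1)) 𝓘(ℝ, EuclideanSpace ℝ (Fin (m + 2))) (⊤ : ℕ∞) w p →
      (p.2 : ℂ) ∈ Complex.slitPlane →
      ContMDiffAt ((𝓡 (m + 1)).prod (𝓡 1)) 𝓘(ℝ, EuclideanSpace ℝ (Fin (m + 3))) (⊤ : ℕ∞)
        (fun q => snocE (Real.sin (psi (Complex.arg (q.2 : ℂ))) • w q)
          (Real.cos (psi (Complex.arg (q.2 : ℂ))))) p := by
    intro w hw hslit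
    have hψ : ContDiffAt ℝ (⊤ : ℕ∞) (fun z : ℂ => psi (Complex.arg z)) (p.2 : ℂ) :=
      psi_contDiff.contDiffAt.comp _ (contDiffAt_arg' hslit)
    have hsin' : ContDiffAt ℝ (⊤ : ℕ∞) (fun z : ℂ => Real.sin (psi (Complex.arg z)))
        ((p.2 : ℂ)) := Real.contDiff_sin.contDiffAt.comp _ hψ
    have hcos' : ContDiffAt ℝ (⊤ : ℕ∞) (fun z : ℂ => Real.cos (psi (Complex.arg z)))
        ((p.2 : ℂ)) := Real.contDiff_cos.contDiffAt.comp _ hψ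
    have hsin : ContMDiffAt ((𝓡 (m + 1)).prod (𝓡 1)) 𝓘(ℝ, ℝ) (⊤ : ℕ∞)
        (fun q : Metric.sphere (0 : EuclideanSpace ℝ (Fin (m + 2))) 1 × Circle =>
          Real.sin (psi (Complex.arg (q.2 : ℂ)))) p :=
      ContDiffAt.comp_contMDiffAt (f := fun q : Metric.sphere (0 : EuclideanSpace ℝ (Fin (m + 2))) 1 × Circle => ((q.2 : ℂ))) hsin' hcC
    have hcos : ContMDiffAt ((𝓡 (m + 1)).prod (𝓡 1)) 𝓘(ℝ, ℝ) (⊤ : ℕ∞)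
        (fun q : Metric.sphere (0 : EuclideanSpace ℝ (Fin (m + 2))) 1 × Circle =>
          Real.cos (psi (Complex.arg (q.2 : ℂ)))) p :=
      ContDiffAt.comp_contMDiffAt (f := fun q : Metric.sphere (0 : EuclideanSpace ℝ (Fin (m + 2))) 1 × Circle => ((q.2 : ℂ))) hcos' hcC
    have h1 : ContMDiffAt ((𝓡 (m + 1)).prod (𝓡 1)) 𝓘(ℝ, EuclideanSpace ℝ (Fin (m + 3))) (⊤ : ℕ∞)
        (fun q => ((snocCLM (m + 2)).comp (ContinuousLinearMap.inl ℝ _ ℝ))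
          (Real.sin (psi (Complex.arg (q.2 : ℂ))) • w q)) p :=
      (((snocCLM (m + 2)).comp (ContinuousLinearMap.inl ℝ _ ℝ)).contDiff.contDiffAt.comp_contMDiffAt
        (hsin.smul hw))
    have h2 : ContMDiffAt ((𝓡 (m + 1)).prod (𝓡 1)) 𝓘(ℝ, EuclideanSpace ℝ (Fin (m + 3))) (⊤ : ℕ∞)
        (fun q => ((snocCLM (m + 2)).comp (ContinuousLinearMap.inr ℝ
          (EuclideanSpace ℝ (Fin (m + 2))) ℝ))
          (Real.cos (psi (Complex.arg (q.2 : ℂ))))) p :=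
      (((snocCLM (m + 2)).comp (ContinuousLinearMap.inr ℝ _ ℝ)).contDiff.contDiffAt.comp_contMDiffAt
        hcos)
    have := h1.add h2
    apply this.congr_of_eventuallyEq
    apply Filter.Eventually.of_forall
    intro q
    simp only [snocE_decomp]
    rfl
  rcases lt_trichotomy ((p.2 : ℂ)).im 0 with him | him | him
  · -- lower semicircle: meridian through a
    have hslit : (p.2 : ℂ) ∈ Complex.slitPlane := Complex.mem_slitPlane_iff.2 (Or.inr him.ne)
    have hev : ∀ᶠ q in 𝓝 p, ((fun q : Metric.sphere (0 : EuclideanSpace ℝ (Fin (m + 2))) 1 ×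
        Circle => ((q.2 : ℂ)).im) q) < 0 := himC.eventually (eventually_lt_nhds him)
    refine (key (fun _ => (a : EuclideanSpace ℝ (Fin (m + 2)))) contMDiffAt_const hslit).congr_of_eventuallyEq ?_
    filter_upwards [hev] with q hq
    have harg : ¬ (0 ≤ Complex.arg (q.2 : ℂ)) := by
      rw [Complex.arg_nonneg_iff]; exact not_le.2 hq
    unfold PhiAmb
    dsimp only
    rw [if_neg harg]
  · -- im = 0 : locally constant
    have hre2 : ((p.2 : ℂ)).re = 1 ∨ ((p.2 : ℂ)).re = -1 := by
      have habs := Circle.norm_coe p.2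
      have h2 : ((p.2 : ℂ)).re * ((p.2 : ℂ)).re = 1 := by
        have := Complex.sq_norm (p.2 : ℂ)
        rw [habs] at this
        rw [Complex.normSq_apply, him] at this
        nlinarith
      exact mul_self_eq_one_iff.1 h2
    rcases hre2 with hre | hre
    · have hev : ∀ᶠ q in 𝓝 p, Real.cos (1/2) < ((q.2 : ℂ)).re := by
        apply hreC.eventually (eventually_gt_nhds ?_)
        show Real.cos (1/2) < ((p.2 : ℂ)).re
        rw [hre]; exact cos_half_lt_one
      refine ContMDiffAt.congr_of_eventuallyEq (contMDiffAt_const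
        (c := snocE (0 : EuclideanSpace ℝ (Fin (m + 2))) 1)) ?_
      filter_upwards [hev] with q hq
      exact PhiAmb_NP m a q hq
    · have hev : ∀ᶠ q in 𝓝 p, ((q.2 : ℂ)).re < -Real.cos (1/2) := by
        apply hreC.eventually (eventually_lt_nhds ?_)
        show ((p.2 : ℂ)).re < -Real.cos (1/2)
        rw [hre]
        have := cos_half_lt_one
        have := Real.cos_pos_of_mem_Ioo (show (1:ℝ)/2 ∈ Set.Ioo (-(π/2)) (π/2) by
          constructor <;> nlinarith [Real.pi_gt_three])
        linarith
      refine ContMDiffAt.congr_of_eventuallyEq (contMDiffAt_const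
        (c := snocE (0 : EuclideanSpace ℝ (Fin (m + 2))) (-1))) ?_
      filter_upwards [hev] with q hq
      exact PhiAmb_SP m a q hq
  · -- upper semicircle: meridian through x
    have hslit : (p.2 : ℂ) ∈ Complex.slitPlane := Complex.mem_slitPlane_iff.2 (Or.inr him.ne')
    have hev : ∀ᶠ q in 𝓝 p, 0 < ((q.2 : ℂ)).im := himC.eventually (eventually_gt_nhds him)
    refine (key (fun q => (q.1 : EuclideanSpace ℝ (Fin (m + 2)))) hcS hslit).congr_of_eventuallyEq ?_
    filter_upwards [hev] with q hq
    have harg : 0 ≤ Complex.arg (q.2 : ℂ) := by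
      rw [Complex.arg_nonneg_iff]; exact hq.le
    unfold PhiAmb
    dsimp only
    rw [if_pos harg]

end SmoothPhi

/-! ### Derivative bound along curves -/

section Curves

variable {m : ℕ} (a : Metric.sphere (0 : EuclideanSpace ℝ (Fin (m + 2))) 1)
  (ρ : ℝ → Metric.sphere (0 : EuclideanSpace ℝ (Fin (m + 2))) 1 × Circle) (t : ℝ)

lemma PhiAmb_curve_bound
    (hx : DifferentiableAt ℝ (fun s => ((ρ s).1 : EuclideanSpace ℝ (Fin (m + 2)))) t)
    (hz : DifferentiableAt ℝ (fun s => ((ρ s).2 : ℂ)) t) :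
    DifferentiableAt ℝ (fun s => PhiAmb m a (ρ s)) t ∧
    ‖deriv (fun s => PhiAmb m a (ρ s)) t‖ ^ 2
      ≤ ‖deriv (fun s => ((ρ s).1 : EuclideanSpace ℝ (Fin (m + 2)))) t‖ ^ 2
        + 4 * ‖deriv (fun s => ((ρ s).2 : ℂ)) t‖ ^ 2 := by
  set x : ℝ → EuclideanSpace ℝ (Fin (m + 2)) := fun s => ((ρ s).1 : _) with hxdef
  set z : ℝ → ℂ := fun s => ((ρ s).2 : ℂ) with hzdef
  set x' := deriv x t
  set z' := deriv z t
  have hxd : HasDerivAt x x' t := hx.hasDerivAt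
  have hzd : HasDerivAt z z' t := hz.hasDerivAt
  have hzabs : ∀ s, ‖z s‖ = 1 := fun s => Circle.norm_coe _
  have hxnorm : ∀ s, ‖x s‖ = 1 := fun s => norm_sphere_coe _
  -- the constant case
  have hconst : ∀ c : EuclideanSpace ℝ (Fin (m + 3)),
      ((fun s => PhiAmb m a (ρ s)) =ᶠ[𝓝 t] fun _ => c) →
      DifferentiableAt ℝ (fun s => PhiAmb m a (ρ s)) t ∧
      ‖deriv (fun s => PhiAmb m a (ρ s)) t‖ ^ 2
        ≤ ‖x'‖ ^ 2 + 4 * ‖z'‖ ^ 2 := by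
    intro c hev
    constructor
    · exact (differentiableAt_const c).congr_of_eventuallyEq hev
    · have h0 : deriv (fun s => PhiAmb m a (ρ s)) t = 0 := by
        rw [hev.deriv_eq]; exact deriv_const t c
      rw [h0, norm_zero]
      nlinarith [sq_nonneg ‖x'‖, sq_nonneg ‖z'‖]
  -- the moving case
  have hmove : ∀ (w : ℝ → EuclideanSpace ℝ (Fin (m + 2))) (w' : EuclideanSpace ℝ (Fin (m + 2))),
      HasDerivAt w w' t → (∀ s, ‖w s‖ = 1) → ⟪w t, w'⟫_ℝ = 0 → ‖w'‖ ≤ ‖x'‖ →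
      z t ∈ Complex.slitPlane →
      ((fun s => PhiAmb m a (ρ s)) =ᶠ[𝓝 t]
        fun s => (snocCLM (m + 2)) (Real.sin (psi ((Complex.log (z s)).im)) • w s,
          Real.cos (psi ((Complex.log (z s)).im)))) →
      DifferentiableAt ℝ (fun s => PhiAmb m a (ρ s)) t ∧
      ‖deriv (fun s => PhiAmb m a (ρ s)) t‖ ^ 2 ≤ ‖x'‖ ^ 2 + 4 * ‖z'‖ ^ 2 := by
    intro w w' hwd hwnorm hwperp hwle hslit heq
    have hlog : HasDerivAt (fun s => Complex.log (z s)) (z' / z t) t := hzd.clog_real hslit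
    have hargd : HasDerivAt (fun s => (Complex.log (z s)).im) ((z' / z t).im) t :=
      Complex.imCLM.hasFDerivAt.comp_hasDerivAt t hlog
    set θ' := (z' / z t).im with hθdef
    set Θ := (Complex.log (z t)).im with hΘdef
    set α := (π / Inorm) * bfun Θ * θ' with hαdef
    have hΨ : HasDerivAt (fun s => psi ((Complex.log (z s)).im)) α t :=
      (hasDerivAt_psi Θ).comp (h₂ := psi) t hargd
    have hsin : HasDerivAt (fun s => Real.sin (psi ((Complex.log (z s)).im)))
        (Real.cos (psi Θ) * α) t := (Real.hasDerivAt_sin _).comp t hΨ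
    have hcos : HasDerivAt (fun s => Real.cos (psi ((Complex.log (z s)).im)))
        (-Real.sin (psi Θ) * α) t := (Real.hasDerivAt_cos _).comp t hΨ
    have hv : HasDerivAt (fun s => Real.sin (psi ((Complex.log (z s)).im)) • w s)
        (Real.sin (psi Θ) • w' + (Real.cos (psi Θ) * α) • w t) t := hsin.smul hwd
    have hpair : HasDerivAt (fun s => (Real.sin (psi ((Complex.log (z s)).im)) • w s,
        Real.cos (psi ((Complex.log (z s)).im))))
        ((Real.sin (psi Θ) • w' + (Real.cos (psi Θ) * α) • w t, -Real.sin (psi Θ) * α)) t :=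
      hv.prodMk hcos
    have hsnoc : HasDerivAt (fun s => (snocCLM (m + 2))
        (Real.sin (psi ((Complex.log (z s)).im)) • w s,
          Real.cos (psi ((Complex.log (z s)).im))))
        ((snocCLM (m + 2)) ((Real.sin (psi Θ) • w' + (Real.cos (psi Θ) * α) • w t,
          -Real.sin (psi Θ) * α))) t :=
      (snocCLM (m + 2)).hasFDerivAt.comp_hasDerivAt t hpair
    have hD : HasDerivAt (fun s => PhiAmb m a (ρ s))
        ((snocCLM (m + 2)) ((Real.sin (psi Θ) • w' + (Real.cos (psi Θ) * α) • w t,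
          -Real.sin (psi Θ) * α))) t := hsnoc.congr_of_eventuallyEq heq
    refine ⟨hD.differentiableAt, ?_⟩
    rw [hD.deriv]
    rw [snocCLM_apply, norm_snoc_sq]
    have hexp : ‖Real.sin (psi Θ) • w' + (Real.cos (psi Θ) * α) • w t‖ ^ 2
        = Real.sin (psi Θ) ^ 2 * ‖w'‖ ^ 2 + (Real.cos (psi Θ) * α) ^ 2 := by
      have hwperp' : ⟪w', w t⟫_ℝ = 0 := by rw [real_inner_comm]; exact hwperp
      rw [norm_add_sq_real]
      rw [real_inner_smul_left, real_inner_smul_right, hwperp']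
      rw [norm_smul, norm_smul, hwnorm]
      simp only [Real.norm_eq_abs]
      rw [mul_pow, mul_pow, sq_abs, sq_abs]
      ring
    rw [hexp]
    -- bounds
    have hαb : α ^ 2 ≤ 4 * ‖z'‖ ^ 2 := by
      have h1 : |θ'| ≤ ‖z'‖ := by
        have h2 : |(z' / z t).im| ≤ ‖z' / z t‖ := Complex.abs_im_le_norm _
        rw [norm_div, hzabs] at h2
        simpa using h2
      have h3 : 0 ≤ (π / Inorm) * bfun Θ := psi_deriv_nonneg Θ
      have h4 : (π / Inorm) * bfun Θ ≤ 2 := psi_deriv_le_two Θ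
      have h5 : |α| ≤ 2 * ‖z'‖ := by
        rw [hαdef, abs_mul]
        have := abs_nonneg θ'
        calc |(π / Inorm) * bfun Θ| * |θ'| = ((π / Inorm) * bfun Θ) * |θ'| := by
              rw [abs_of_nonneg h3]
        _ ≤ 2 * ‖z'‖ := by
              apply mul_le_mul h4 h1 (abs_nonneg _) (by norm_num)
      calc α ^ 2 = |α| ^ 2 := (sq_abs α).symm
      _ ≤ (2 * ‖z'‖) ^ 2 := by nlinarith [abs_nonneg α]
      _ = 4 * ‖z'‖ ^ 2 := by ring
    have hs2 : Real.sin (psi Θ) ^ 2 ≤ 1 := Real.sin_sq_le_one _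
    have hc2 : Real.sin (psi Θ) ^ 2 + Real.cos (psi Θ) ^ 2 = 1 := Real.sin_sq_add_cos_sq _
    have hw2 : ‖w'‖ ^ 2 ≤ ‖x'‖ ^ 2 := by nlinarith [norm_nonneg w', norm_nonneg x']
    nlinarith [sq_nonneg (Real.sin (psi Θ)), sq_nonneg (Real.cos (psi Θ)), sq_nonneg α,
      norm_nonneg w', sq_nonneg ‖w'‖, mul_nonneg (sq_nonneg (Real.sin (psi Θ))) (sq_nonneg ‖w'‖)]
  -- orthogonality of the sphere curve and its derivative
  have hperp : ⟪x t, x'⟫_ℝ = 0 := by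
    have hip : HasDerivAt (fun s => ⟪x s, x s⟫_ℝ) (⟪x t, x'⟫_ℝ + ⟪x', x t⟫_ℝ) t :=
      hxd.inner ℝ hxd
    have hipc : HasDerivAt (fun _ : ℝ => (1 : ℝ)) (⟪x t, x'⟫_ℝ + ⟪x', x t⟫_ℝ) t := by
      apply hip.congr_of_eventuallyEq
      apply Filter.Eventually.of_forall
      intro s
      show (1 : ℝ) = ⟪x s, x s⟫_ℝ
      rw [real_inner_self_eq_norm_sq, hxnorm s]
      norm_num
    have h0 := hipc.unique (hasDerivAt_const t 1)
    have h1 : ⟪x', x t⟫_ℝ = ⟪x t, x'⟫_ℝ := real_inner_comm _ _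
    rw [h1] at h0
    linarith [h0]
  rcases lt_trichotomy ((z t).im) 0 with him | him | him
  · -- lower branch
    have hslit : z t ∈ Complex.slitPlane := Complex.mem_slitPlane_iff.2 (Or.inr him.ne)
    have hev : ∀ᶠ s in 𝓝 t, (z s).im < 0 :=
      (Complex.continuous_im.continuousAt.comp hzd.continuousAt).eventually
        (eventually_lt_nhds him)
    refine hmove (fun _ => (a : EuclideanSpace ℝ (Fin (m + 2)))) 0 (hasDerivAt_const t _)
      (fun _ => norm_sphere_coe a) (by simp) (by simp) hslit ?_
    filter_upwards [hev] with s hs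
    have harg : ¬ (0 ≤ Complex.arg (z s)) := by
      rw [Complex.arg_nonneg_iff]; exact not_le.2 hs
    unfold PhiAmb
    dsimp only
    rw [Complex.log_im, if_neg harg]
    rfl
  · -- z t = ±1 : locally constant
    have hre2 : (z t).re = 1 ∨ (z t).re = -1 := by
      have h2 : (z t).re * (z t).re = 1 := by
        have h3 := Complex.sq_norm (z t)
        rw [hzabs t] at h3
        rw [Complex.normSq_apply, him] at h3
        nlinarith
      exact mul_self_eq_one_iff.1 h2
    have hrec : ContinuousAt (fun s => (z s).re) t :=
      Complex.continuous_re.continuousAt.comp hzd.continuousAt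
    rcases hre2 with hre | hre
    · have hev : ∀ᶠ s in 𝓝 t, Real.cos (1/2) < (z s).re := by
        apply hrec.eventually (eventually_gt_nhds ?_)
        show Real.cos (1/2) < (z t).re
        rw [hre]; exact cos_half_lt_one
      apply hconst (snocE (0 : EuclideanSpace ℝ (Fin (m + 2))) 1)
      filter_upwards [hev] with s hs
      exact PhiAmb_NP m a (ρ s) hs
    · have hev : ∀ᶠ s in 𝓝 t, (z s).re < -Real.cos (1/2) := by
        apply hrec.eventually (eventually_lt_nhds ?_)
        show (z t).re < -Real.cos (1/2)
        rw [hre]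
        have h1 := cos_half_lt_one
        have h2 := Real.cos_pos_of_mem_Ioo (show (1:ℝ)/2 ∈ Set.Ioo (-(π/2)) (π/2) by
          constructor <;> nlinarith [Real.pi_gt_three])
        linarith
      apply hconst (snocE (0 : EuclideanSpace ℝ (Fin (m + 2))) (-1))
      filter_upwards [hev] with s hs
      exact PhiAmb_SP m a (ρ s) hs
  · -- upper branch
    have hslit : z t ∈ Complex.slitPlane := Complex.mem_slitPlane_iff.2 (Or.inr him.ne')
    have hev : ∀ᶠ s in 𝓝 t, 0 < (z s).im :=
      (Complex.continuous_im.continuousAt.comp hzd.continuousAt).eventually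
        (eventually_gt_nhds him)
    refine hmove x x' hxd hxnorm hperp le_rfl hslit ?_
    filter_upwards [hev] with s hs
    have harg : 0 ≤ Complex.arg (z s) := by
      rw [Complex.arg_nonneg_iff]; exact hs.le
    unfold PhiAmb
    dsimp only
    rw [Complex.log_im, if_pos harg]
    rfl

end Curves

section Homotopy

variable (m : ℕ) (a : Metric.sphere (0 : EuclideanSpace ℝ (Fin (m + 2))) 1)

lemma degOneModel_eq (p : Metric.sphere (0 : EuclideanSpace ℝ (Fin (m + 2))) 1 × Circle) :
    degOneModel m a p =
      if 0 ≤ Complex.arg (p.2 : ℂ) then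
        snocE (Real.sin (Complex.arg (p.2 : ℂ)) • (p.1 : EuclideanSpace ℝ (Fin (m + 2))))
          (Real.cos (Complex.arg (p.2 : ℂ)))
      else
        snocE (Real.sin (Complex.arg (p.2 : ℂ)) • (a : EuclideanSpace ℝ (Fin (m + 2))))
          (Real.cos (Complex.arg (p.2 : ℂ))) := rfl

lemma degOneModel_norm (p : Metric.sphere (0 : EuclideanSpace ℝ (Fin (m + 2))) 1 × Circle) :
    ‖degOneModel m a p‖ = 1 := by
  rw [degOneModel_eq]
  split_ifs <;>
  · apply norm_snoc_one
    rw [norm_smul, norm_sphere_coe, mul_one, Real.norm_eq_abs, sq_abs, Real.sin_sq_add_cos_sq]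

lemma degOneModel_formula (p : Metric.sphere (0 : EuclideanSpace ℝ (Fin (m + 2))) 1 × Circle) :
    degOneModel m a p =
      snocE ((max ((p.2 : ℂ)).im 0) • (p.1 : EuclideanSpace ℝ (Fin (m + 2)))
          + (min ((p.2 : ℂ)).im 0) • (a : EuclideanSpace ℝ (Fin (m + 2))))
        ((p.2 : ℂ)).re := by
  have hz0 : (p.2 : ℂ) ≠ 0 := by
    intro h0
    have := Circle.norm_coe p.2
    rw [h0] at this; simp at this
  have hsin : Real.sin (Complex.arg (p.2 : ℂ)) = ((p.2 : ℂ)).im := by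
    rw [Complex.sin_arg, Circle.norm_coe, div_one]
  have hcos : Real.cos (Complex.arg (p.2 : ℂ)) = ((p.2 : ℂ)).re := by
    rw [Complex.cos_arg hz0, Circle.norm_coe, div_one]
  rw [degOneModel_eq]
  by_cases h : 0 ≤ Complex.arg (p.2 : ℂ)
  · have him : 0 ≤ ((p.2 : ℂ)).im := Complex.arg_nonneg_iff.1 h
    rw [if_pos h, hsin, hcos, max_eq_left him, min_eq_right him, zero_smul, add_zero]
  · have him : ((p.2 : ℂ)).im < 0 := by
      rw [← Complex.arg_neg_iff]; exact not_le.1 h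
    rw [if_neg h, hsin, hcos, max_eq_right him.le, min_eq_left him.le, zero_smul, zero_add]

lemma degOneModel_continuous : Continuous (degOneModel m a) := by
  have hrw : degOneModel m a = fun p => snocCLM (m + 2)
      ((max ((p.2 : ℂ)).im 0) • (p.1 : EuclideanSpace ℝ (Fin (m + 2)))
          + (min ((p.2 : ℂ)).im 0) • (a : EuclideanSpace ℝ (Fin (m + 2))), ((p.2 : ℂ)).re) :=
    funext fun p => by rw [degOneModel_formula, snocCLM_apply]
  rw [hrw]
  have hc2 : Continuous (fun p : Metric.sphere (0 : EuclideanSpace ℝ (Fin (m + 2))) 1 × Circle =>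
      ((p.2 : ℂ))) := continuous_subtype_val.comp continuous_snd
  have hc1 : Continuous (fun p : Metric.sphere (0 : EuclideanSpace ℝ (Fin (m + 2))) 1 × Circle =>
      ((p.1 : EuclideanSpace ℝ (Fin (m + 2))))) := continuous_subtype_val.comp continuous_fst
  exact (snocCLM (m + 2)).continuous.comp
    (((((Complex.continuous_im.comp hc2).max continuous_const).smul hc1).add
      (((Complex.continuous_im.comp hc2).min continuous_const).smul continuous_const)).prodMk
      (Complex.continuous_re.comp hc2))

lemma cos_formula (x : ℝ) : Real.cos x = 1 - 2 * Real.sin (x/2) ^ 2 := by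
  have h := Real.sin_sq_add_cos_sq (x/2)
  have h2 := Real.cos_two_mul (x/2)
  rw [show 2 * (x/2) = x by ring] at h2
  linarith

lemma neg_one_lt_cos {d : ℝ} (h : |d| < π) : -1 < Real.cos d := by
  have := Real.cos_lt_cos_of_nonneg_of_le_pi (abs_nonneg d) le_rfl h
  rw [Real.cos_abs, Real.cos_pi] at this
  linarith

lemma psi_close {θ : ℝ} (h1 : -π < θ) (h2 : θ ≤ π) : |psi θ - θ| < π := by
  rcases le_or_gt 0 θ with hθ | hθ
  · have hψ0 : 0 ≤ psi θ := psi_nonneg hθ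
    have hψπ : psi θ ≤ π := psi_le_pi h2
    rw [abs_lt]
    constructor
    · by_contra hcon
      push_neg at hcon
      have hθπ : θ = π := le_antisymm h2 (by linarith)
      rw [hθπ, psi_pi] at hcon
      linarith [Real.pi_pos]
    · by_contra hcon
      push_neg at hcon
      have hθ0 : θ = 0 := le_antisymm (by linarith) hθ
      rw [hθ0, psi_zero] at hcon
      linarith [Real.pi_pos]
  · have hodd : psi θ = -psi (-θ) := by
      have := psi_odd (-θ)
      rw [neg_neg] at this
      linarith [this]
    have hψ0 : 0 ≤ psi (-θ) := psi_nonneg (by linarith)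
    have hψπ : psi (-θ) ≤ π := psi_le_pi (by linarith)
    rw [hodd, abs_lt]
    constructor <;> nlinarith

lemma inner_PhiAmb_model (p : Metric.sphere (0 : EuclideanSpace ℝ (Fin (m + 2))) 1 × Circle) :
    -1 < ⟪PhiAmb m a p, degOneModel m a p⟫_ℝ := by
  set θ := Complex.arg (p.2 : ℂ) with hθ
  have hkey : ⟪PhiAmb m a p, degOneModel m a p⟫_ℝ = Real.cos (psi θ - θ) := by
    have hip : ∀ w : Metric.sphere (0 : EuclideanSpace ℝ (Fin (m + 2))) 1,
        ⟪snocE (Real.sin (psi θ) • (w : EuclideanSpace ℝ (Fin (m + 2)))) (Real.cos (psi θ)),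
         snocE (Real.sin θ • (w : EuclideanSpace ℝ (Fin (m + 2)))) (Real.cos θ)⟫_ℝ
          = Real.cos (psi θ - θ) := by
      intro w
      rw [inner_snoc, real_inner_smul_left, real_inner_smul_right,
        real_inner_self_eq_norm_sq, norm_sphere_coe, Real.cos_sub]
      ring
    rw [degOneModel_eq]
    unfold PhiAmb
    dsimp only
    rw [← hθ]
    split_ifs with h
    · exact hip p.1
    · exact hip a
  rw [hkey]
  exact neg_one_lt_cos (psi_close (Complex.neg_pi_lt_arg _) (Complex.arg_le_pi _))

end Homotopy

/-! ### Per-slice Lipschitz estimate -/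

section Slice

variable (m : ℕ) (a : Metric.sphere (0 : EuclideanSpace ℝ (Fin (m + 2))) 1)

lemma sin_smul_le {s u : ℝ} (hs0 : 0 ≤ s) (hs1 : s ≤ 1) (hu0 : 0 ≤ u) (huπ : u ≤ π) :
    s * Real.sin u ≤ Real.sin (s * u) := by
  have hconc := strictConcaveOn_sin_Icc.concaveOn
  have h := hconc.2 (Set.mem_Icc.2 ⟨le_rfl, Real.pi_pos.le⟩)
    (Set.mem_Icc.2 ⟨hu0, huπ⟩) (by linarith : (0:ℝ) ≤ 1 - s) hs0 (by ring)
  simpa using h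

lemma slice_lemma (t : Circle) :
    (∃ k : ℝ, 0 ≤ k ∧ k < 1 ∧
      ∀ x y : Metric.sphere (0 : EuclideanSpace ℝ (Fin (m + 2))) 1,
        Real.arccos ⟪PhiAmb m a (x, t), PhiAmb m a (y, t)⟫_ℝ
          ≤ k * Real.arccos ⟪(x : EuclideanSpace ℝ (Fin (m + 2))),
              (y : EuclideanSpace ℝ (Fin (m + 2)))⟫_ℝ) ∨
    (∀ x : Metric.sphere (0 : EuclideanSpace ℝ (Fin (m + 2))) 1,
      PhiAmb m a (x, t) = snocE (x : EuclideanSpace ℝ (Fin (m + 2))) 0) := by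
  set θ := Complex.arg (t : ℂ) with hθdef
  set s := Real.sin (psi θ) with hsdef
  set c := Real.cos (psi θ) with hcdef
  have hsc : s ^ 2 + c ^ 2 = 1 := Real.sin_sq_add_cos_sq _
  rcases lt_or_ge θ 0 with hneg | hpos
  · -- constant slice
    left
    refine ⟨1/2, by norm_num, by norm_num, ?_⟩
    intro x y
    have hform : ∀ x' : Metric.sphere (0 : EuclideanSpace ℝ (Fin (m + 2))) 1,
        PhiAmb m a (x', t) = snocE (s • (a : EuclideanSpace ℝ (Fin (m + 2)))) c := by
      intro x'
      unfold PhiAmb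
      dsimp only
      rw [if_neg (not_le.2 hneg)]
    rw [hform x, hform y, inner_snoc, real_inner_smul_left, real_inner_smul_right,
      real_inner_self_eq_norm_sq, norm_sphere_coe]
    have : s * (s * 1 ^ 2) + c * c = 1 := by nlinarith
    rw [this, Real.arccos_one]
    have := Real.arccos_nonneg ⟪(x : EuclideanSpace ℝ (Fin (m + 2))),
      (y : EuclideanSpace ℝ (Fin (m + 2)))⟫_ℝ
    linarith
  · -- moving slice
    have hψ0 : 0 ≤ psi θ := psi_nonneg hpos
    have hψπ : psi θ ≤ π := psi_le_pi (Complex.arg_le_pi _)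
    have hs0 : 0 ≤ s := Real.sin_nonneg_of_nonneg_of_le_pi hψ0 hψπ
    have hs1 : s ≤ 1 := Real.sin_le_one _
    have hform : ∀ x' : Metric.sphere (0 : EuclideanSpace ℝ (Fin (m + 2))) 1,
        PhiAmb m a (x', t) = snocE (s • (x' : EuclideanSpace ℝ (Fin (m + 2)))) c := by
      intro x'
      unfold PhiAmb
      dsimp only
      rw [if_pos hpos]
    rcases eq_or_lt_of_le hs1 with hs1' | hs1'
    · -- equatorial inclusion
      right
      intro x
      have hc0 : c = 0 := by
        have : c ^ 2 = 0 := by nlinarith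
        exact pow_eq_zero_iff (by norm_num) |>.1 this
      rw [hform x, hc0, hs1', one_smul]
    · -- strict contraction
      left
      refine ⟨s, hs0, hs1', ?_⟩
      intro x y
      set ip := ⟪(x : EuclideanSpace ℝ (Fin (m + 2))),
        (y : EuclideanSpace ℝ (Fin (m + 2)))⟫_ℝ with hipdef
      have hiple : |ip| ≤ 1 := by
        have := abs_real_inner_le_norm (x : EuclideanSpace ℝ (Fin (m + 2)))
          (y : EuclideanSpace ℝ (Fin (m + 2)))
        rwa [norm_sphere_coe, norm_sphere_coe, mul_one] at this
      rcases abs_le.1 hiple with ⟨hip1, hip2⟩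
      set θ₀ := Real.arccos ip with hθ₀def
      have hθ₀0 : 0 ≤ θ₀ := Real.arccos_nonneg ip
      have hθ₀π : θ₀ ≤ π := Real.arccos_le_pi ip
      have hcosθ₀ : Real.cos θ₀ = ip := Real.cos_arccos hip1 hip2
      have hinner : ⟪PhiAmb m a (x, t), PhiAmb m a (y, t)⟫_ℝ = s ^ 2 * ip + c ^ 2 := by
        rw [hform x, hform y, inner_snoc, real_inner_smul_left, real_inner_smul_right]
        ring
      rw [hinner]
      -- key : cos (s * θ₀) ≤ s ^ 2 * ip + c ^ 2
      have hkey : Real.cos (s * θ₀) ≤ s ^ 2 * ip + c ^ 2 := by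
        have h1 := sin_smul_le hs0 hs1 (by linarith : 0 ≤ θ₀/2) (by linarith : θ₀/2 ≤ π)
        have h2 : Real.cos (s * θ₀) = 1 - 2 * Real.sin (s * θ₀ / 2) ^ 2 := cos_formula _
        have h3 : ip = 1 - 2 * Real.sin (θ₀ / 2) ^ 2 := by
          rw [← hcosθ₀]; exact cos_formula θ₀
        have h4 : Real.sin (s * (θ₀ / 2)) ^ 2 ≥ (s * Real.sin (θ₀ / 2)) ^ 2 := by
          have hsin0 : 0 ≤ Real.sin (θ₀/2) :=
            Real.sin_nonneg_of_nonneg_of_le_pi (by linarith) (by linarith)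
          nlinarith [mul_nonneg hs0 hsin0]
        rw [h2, h3]
        have : s * θ₀ / 2 = s * (θ₀ / 2) := by ring
        rw [this]
        nlinarith
      have hsθ₀0 : 0 ≤ s * θ₀ := mul_nonneg hs0 hθ₀0
      have hsθ₀π : s * θ₀ ≤ π := by nlinarith
      calc Real.arccos (s ^ 2 * ip + c ^ 2)
          ≤ Real.arccos (Real.cos (s * θ₀)) := by
            unfold Real.arccos
            have := Real.monotone_arcsin hkey
            linarith
      _ = s * θ₀ := Real.arccos_cos hsθ₀0 hsθ₀π

end Slice


theorem exists_degree_one_collapse_map (m : ℕ) :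
    ∃ (φ : Metric.sphere (0 : EuclideanSpace ℝ (Fin (m + 2))) 1 × Circle →
           Metric.sphere (0 : EuclideanSpace ℝ (Fin (m + 3))) 1)
      (a : Metric.sphere (0 : EuclideanSpace ℝ (Fin (m + 2))) 1),
      -- φ is smooth
      ContMDiff ((𝓡 (m + 1)).prod (𝓡 1)) (𝓡 (m + 2)) (⊤ : ℕ∞) φ ∧
      -- φ has degree 1: it is homotopic within the sphere to the degree-one model map
      (∃ H : ℝ × (Metric.sphere (0 : EuclideanSpace ℝ (Fin (m + 2))) 1 × Circle) →
              EuclideanSpace ℝ (Fin (m + 3)),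
        Continuous H ∧ (∀ z, ‖H z‖ = 1) ∧
        (∀ p, H (0, p) = (φ p : EuclideanSpace ℝ (Fin (m + 3)))) ∧
        (∀ p, H (1, p) = degOneModel m a p)) ∧
      -- pullback metric inequality φ* g_{Sⁿ} ≤ g_{S^{n-1}} + 4 g_{S¹}, on curves
      (∀ (ρ : ℝ → Metric.sphere (0 : EuclideanSpace ℝ (Fin (m + 2))) 1 × Circle) (t : ℝ),
        DifferentiableAt ℝ (fun s => ((ρ s).1 : EuclideanSpace ℝ (Fin (m + 2)))) t →
        DifferentiableAt ℝ (fun s => ((ρ s).2 : ℂ)) t →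
        DifferentiableAt ℝ (fun s => (φ (ρ s) : EuclideanSpace ℝ (Fin (m + 3)))) t ∧
        ‖deriv (fun s => (φ (ρ s) : EuclideanSpace ℝ (Fin (m + 3)))) t‖ ^ 2
          ≤ ‖deriv (fun s => ((ρ s).1 : EuclideanSpace ℝ (Fin (m + 2)))) t‖ ^ 2
            + 4 * ‖deriv (fun s => ((ρ s).2 : ℂ)) t‖ ^ 2) ∧
      -- for each t, φ(·,t) is Lipschitz with constant < 1 (geodesic distances), or the
      -- standard equatorial inclusion
      (∀ t : Circle,
        (∃ k : ℝ, 0 ≤ k ∧ k < 1 ∧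
          ∀ x y : Metric.sphere (0 : EuclideanSpace ℝ (Fin (m + 2))) 1,
            Real.arccos ⟪(φ (x, t) : EuclideanSpace ℝ (Fin (m + 3))),
                (φ (y, t) : EuclideanSpace ℝ (Fin (m + 3)))⟫_ℝ
              ≤ k * Real.arccos ⟪(x : EuclideanSpace ℝ (Fin (m + 2))),
                  (y : EuclideanSpace ℝ (Fin (m + 2)))⟫_ℝ) ∨
        (∀ x : Metric.sphere (0 : EuclideanSpace ℝ (Fin (m + 2))) 1,
          (φ (x, t) : EuclideanSpace ℝ (Fin (m + 3)))
            = (WithLp.toLp 2 (Fin.snoc (WithLp.ofLp (x : EuclideanSpace ℝ (Fin (m + 2))) : Fin (m + 2) → ℝ) 0) :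
                EuclideanSpace ℝ (Fin (m + 3))))) := by
  have ha : (EuclideanSpace.single (0 : Fin (m + 2)) (1:ℝ)) ∈
      Metric.sphere (0 : EuclideanSpace ℝ (Fin (m + 2))) 1 := by
    rw [mem_sphere_zero_iff_norm, EuclideanSpace.norm_single, norm_one]
  set a : Metric.sphere (0 : EuclideanSpace ℝ (Fin (m + 2))) 1 := ⟨_, ha⟩ with hadef
  refine ⟨Set.codRestrict (PhiAmb m a) _ (PhiAmb_mem m a), a,
    (PhiAmb_contMDiff m a).codRestrict_sphere _, ?_, ?_, ?_⟩
  · -- homotopy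
    set τ : ℝ → ℝ := fun r => max 0 (min r 1) with hτdef
    set u : ℝ × (Metric.sphere (0 : EuclideanSpace ℝ (Fin (m + 2))) 1 × Circle) →
        EuclideanSpace ℝ (Fin (m + 3)) := fun q =>
      (1 - τ q.1) • PhiAmb m a q.2 + τ q.1 • degOneModel m a q.2 with hudef
    have hτ0 : ∀ r, 0 ≤ τ r := fun r => le_max_left _ _
    have hτ1 : ∀ r, τ r ≤ 1 := fun r => max_le (by norm_num) (min_le_right _ _)
    have hτcont : Continuous τ := continuous_const.max (continuous_id.min continuous_const)
    have hApos : ∀ p, ‖PhiAmb m a p‖ = 1 := PhiAmb_norm m a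
    have hBpos : ∀ p, ‖degOneModel m a p‖ = 1 := degOneModel_norm m a
    have huner : ∀ q, u q ≠ 0 := by
      intro q
      have hip := inner_PhiAmb_model m a q.2
      have hAA : ⟪PhiAmb m a q.2, PhiAmb m a q.2⟫_ℝ = 1 := by
        rw [real_inner_self_eq_norm_sq, hApos]; norm_num
      have hBB : ⟪degOneModel m a q.2, degOneModel m a q.2⟫_ℝ = 1 := by
        rw [real_inner_self_eq_norm_sq, hBpos]; norm_num
      have hform : ⟪u q, u q⟫_ℝ = (1 - τ q.1) ^ 2 + (τ q.1) ^ 2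
          + 2 * ((1 - τ q.1) * τ q.1) * ⟪PhiAmb m a q.2, degOneModel m a q.2⟫_ℝ := by
        show ⟪(1 - τ q.1) • PhiAmb m a q.2 + τ q.1 • degOneModel m a q.2,
          (1 - τ q.1) • PhiAmb m a q.2 + τ q.1 • degOneModel m a q.2⟫_ℝ = _
        rw [real_inner_add_add_self, real_inner_smul_left, real_inner_smul_right, hAA,
          real_inner_smul_left, real_inner_smul_right,
          real_inner_smul_left, real_inner_smul_right, hBB]
        ring
      have hpos : 0 < ⟪u q, u q⟫_ℝ := by
        rw [hform]
        rcases eq_or_ne (τ q.1) (1/2) with hhalf | hhalf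
        · rw [hhalf]; nlinarith
        · have hne : 1 - 2 * τ q.1 ≠ 0 := fun h => hhalf (by linarith)
          have h12 : 0 < (1 - 2 * τ q.1) ^ 2 :=
            lt_of_le_of_ne (sq_nonneg _) (Ne.symm (pow_ne_zero 2 hne))
          nlinarith [mul_nonneg (mul_nonneg (sub_nonneg.2 (hτ1 q.1)) (hτ0 q.1))
            (by linarith : (0:ℝ) ≤ 1 + ⟪PhiAmb m a q.2, degOneModel m a q.2⟫_ℝ)]
      intro h0
      rw [h0, inner_zero_left] at hpos
      exact lt_irrefl 0 hpos
    refine ⟨fun q => ‖u q‖⁻¹ • u q, ?_, ?_, ?_, ?_⟩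
    · have hucont : Continuous u := by
        apply Continuous.add
        · exact (continuous_const.sub (hτcont.comp continuous_fst)).smul
            ((PhiAmb_contMDiff m a).continuous.comp continuous_snd)
        · exact (hτcont.comp continuous_fst).smul
            ((degOneModel_continuous m a).comp continuous_snd)
      exact ((hucont.norm).inv₀ (fun q => norm_ne_zero_iff.2 (huner q))).smul hucont
    · intro q
      rw [norm_smul, norm_inv, norm_norm, inv_mul_cancel₀ (norm_ne_zero_iff.2 (huner q))]
    · intro p
      have hτ00 : τ (0:ℝ) = 0 := by simp [hτdef]
      have hu0 : u (0, p) = PhiAmb m a p := by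
        show (1 - τ (0:ℝ)) • PhiAmb m a p + τ (0:ℝ) • degOneModel m a p = _
        rw [hτ00]; simp
      show ‖u (0, p)‖⁻¹ • u (0, p) = _
      rw [hu0, hApos p, inv_one, one_smul]
      rfl
    · intro p
      have hτ11 : τ (1:ℝ) = 1 := by simp [hτdef]
      have hu1 : u (1, p) = degOneModel m a p := by
        show (1 - τ (1:ℝ)) • PhiAmb m a p + τ (1:ℝ) • degOneModel m a p = _
        rw [hτ11]; simp
      show ‖u (1, p)‖⁻¹ • u (1, p) = _
      rw [hu1, hBpos p, inv_one, one_smul]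
  · -- curves
    intro ρ t hx hz
    exact PhiAmb_curve_bound a ρ t hx hz
  · -- slices
    intro t
    exact slice_lemma m a t
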